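/- Any subset S ⊆ ℤ/13ℤ with |S| = 5 that is homometric to R = {0, 2, 5, 7, 10} (i.e., has the same chordal-distance histogram) is a rotation of R: S = {x + l : x ∈ R} for some l ∈ ℤ/13ℤ. -/
import Mathlib


/-- Chordal distance in `ℤ/nℤ`: `min(d, n - d)` where `d = (i - j) mod n`. -/
def chordalDist (n : ℕ) (i j : ZMod n) : ℕ := min (i - j).val (n - (i - j).val)

/-- Multiplicity of a chordal distance `d` in a rhythm `R ⊆ ℤ/nℤ`. -/
def multiplicity' (n : ℕ) (R : Finset (ZMod n)) (d : ℕ) : ℕ :=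
  (R.offDiag.filter fun q => chordalDist n q.1 q.2 = d).card / 2

/-- Translation invariance of the histogram. -/
lemma multiplicity'_image_add (S : Finset (ZMod 13)) (t : ZMod 13) (k : ℕ) :
    multiplicity' 13 (S.image (fun x => x + t)) k = multiplicity' 13 S k := by
  unfold multiplicity'
  congr 1
  apply Finset.card_bij (fun q _ => (q.1 - t, q.2 - t))
  · rintro ⟨x, y⟩ hq
    simp only [Finset.mem_filter, Finset.mem_offDiag, Finset.mem_image] at hq ⊢
    obtain ⟨⟨⟨x', hx', hx⟩, ⟨y', hy', hy⟩, hne⟩, hcd⟩ := hq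
    subst hx hy
    refine ⟨⟨by simpa using hx', by simpa using hy', by simpa using hne⟩, ?_⟩
    simpa [chordalDist, add_sub_add_right_eq_sub] using hcd
  · rintro ⟨x, y⟩ hx ⟨x', y'⟩ hy h
    simp only [Prod.mk.injEq, sub_left_inj] at h
    simp [Prod.ext_iff, h.1, h.2]
  · rintro ⟨x, y⟩ hq
    refine ⟨(x + t, y + t), ?_, by simp⟩
    simp only [Finset.mem_filter, Finset.mem_offDiag, Finset.mem_image] at hq ⊢
    obtain ⟨⟨hx, hy, hne⟩, hcd⟩ := hq
    refine ⟨⟨⟨x, hx, rfl⟩, ⟨y, hy, rfl⟩, by simpa using hne⟩, ?_⟩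
    simpa [chordalDist, add_sub_add_right_eq_sub] using hcd

set_option synthInstance.maxHeartbeats 1000000 in
set_option synthInstance.maxSize 2000 in
set_option maxHeartbeats 10000000 in
set_option maxRecDepth 100000 in
lemma aux_E513 : ∀ b c d e : ZMod 13,
    0 < b.val → b.val < c.val → c.val < d.val → d.val < e.val →
    (multiplicity' 13 ({0,b,c,d,e} : Finset (ZMod 13)) 1 = 0 ∧
     multiplicity' 13 ({0,b,c,d,e} : Finset (ZMod 13)) 2 = 2 ∧
     multiplicity' 13 ({0,b,c,d,e} : Finset (ZMod 13)) 3 = 3 ∧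
     multiplicity' 13 ({0,b,c,d,e} : Finset (ZMod 13)) 4 = 0 ∧
     multiplicity' 13 ({0,b,c,d,e} : Finset (ZMod 13)) 5 = 4 ∧
     multiplicity' 13 ({0,b,c,d,e} : Finset (ZMod 13)) 6 = 1) →
    ∃ l : ZMod 13, ({0,b,c,d,e} : Finset (ZMod 13)) =
      ({0, 2, 5, 7, 10} : Finset (ZMod 13)).image (fun x => x + l) := by
  decide

/-- Any `S ⊆ ℤ/13ℤ` with `|S| = 5` homometric to
`R = {0,2,5,7,10}` (same chordal-distance histogram) is a rotation of `R`. -/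
theorem homometric_to_E513_is_rotation (S : Finset (ZMod 13)) (hcard : S.card = 5)
    (hhom : ∀ d : ℕ, multiplicity' 13 S d =
      multiplicity' 13 ({0, 2, 5, 7, 10} : Finset (ZMod 13)) d) :
    ∃ l : ZMod 13, S = ({0, 2, 5, 7, 10} : Finset (ZMod 13)).image (fun x => x + l) := by
  -- pick an element and translate it to 0
  obtain ⟨s, hs⟩ : S.Nonempty := by rw [← Finset.card_pos, hcard]; norm_num
  set T : Finset (ZMod 13) := S.image (fun x => x + (-s)) with hT
  have hT0 : (0 : ZMod 13) ∈ T := Finset.mem_image.mpr ⟨s, hs, by simp⟩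
  have hTcard : T.card = 5 := by
    rw [hT, Finset.card_image_of_injective _ (add_left_injective _), hcard]
  have hTmult : ∀ k : ℕ, multiplicity' 13 T k =
      multiplicity' 13 ({0, 2, 5, 7, 10} : Finset (ZMod 13)) k := by
    intro k; rw [hT, multiplicity'_image_add]; exact hhom k
  -- extract sorted values of T in ℕ
  have hvalinj : Function.Injective (ZMod.val : ZMod 13 → ℕ) := ZMod.val_injective 13
  obtain ⟨v1, v2, v3, v4, hVeq, hv01, hv12, hv23, hv34, hvlt1, hvlt2, hvlt3, hvlt4⟩ :
      ∃ v1 v2 v3 v4 : ℕ, T.image ZMod.val = {0, v1, v2, v3, v4} ∧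
        0 < v1 ∧ v1 < v2 ∧ v2 < v3 ∧ v3 < v4 ∧
        v1 < 13 ∧ v2 < 13 ∧ v3 < 13 ∧ v4 < 13 := by
    have hVcard : (T.image ZMod.val).card = 5 := by
      rw [Finset.card_image_of_injective _ hvalinj, hTcard]
    set V : Finset ℕ := T.image ZMod.val with hV
    let f := V.orderIsoOfFin hVcard
    have hfmem : ∀ i, (f i : ℕ) ∈ V := fun i => (f i).2
    have hmono : ∀ i j : Fin 5, i < j → (f i : ℕ) < (f j : ℕ) := by
      intro i j hij
      exact_mod_cast f.strictMono hij
    have hVeq : V = {(f 0 : ℕ), (f 1 : ℕ), (f 2 : ℕ), (f 3 : ℕ), (f 4 : ℕ)} := by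
      ext x
      constructor
      · intro hx
        obtain ⟨i, hi⟩ : ∃ i, (f i : ℕ) = x :=
          ⟨f.symm ⟨x, hx⟩, by rw [f.apply_symm_apply]⟩
        simp only [Finset.mem_insert, Finset.mem_singleton]
        fin_cases i <;> simp_all
      · intro hx
        simp only [Finset.mem_insert, Finset.mem_singleton] at hx
        rcases hx with h|h|h|h|h <;> (subst h; exact hfmem _)
    have h0V : (0 : ℕ) ∈ V := Finset.mem_image.mpr ⟨0, hT0, ZMod.val_zero⟩
    have hf0 : (f 0 : ℕ) = 0 := by
      have h1 : (f 0 : ℕ) ≤ (f (f.symm ⟨0, h0V⟩) : ℕ) := by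
        have := f.monotone (Fin.zero_le (f.symm ⟨0, h0V⟩))
        exact_mod_cast this
      have h2 : (f (f.symm ⟨0, h0V⟩) : ℕ) = 0 := by rw [f.apply_symm_apply]
      omega
    have hvlt : ∀ i, (f i : ℕ) < 13 := by
      intro i
      obtain ⟨x, _, hx⟩ := Finset.mem_image.mp (hfmem i)
      rw [← hx]; exact ZMod.val_lt x
    rw [hf0] at hVeq
    exact ⟨f 1, f 2, f 3, f 4, hVeq,
      hf0 ▸ hmono 0 1 (by decide), hmono 1 2 (by decide), hmono 2 3 (by decide),
      hmono 3 4 (by decide), hvlt 1, hvlt 2, hvlt 3, hvlt 4⟩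
  -- T as explicit set of casts
  have hTeq : T = {0, ((v1 : ZMod 13)), ((v2 : ZMod 13)), ((v3 : ZMod 13)), ((v4 : ZMod 13))} := by
    have hTV : T = (T.image ZMod.val).image (fun v : ℕ => (v : ZMod 13)) := by
      rw [Finset.image_image]
      have : ((fun v : ℕ => (v : ZMod 13)) ∘ ZMod.val) = id := by
        funext x; simp [Function.comp, ZMod.natCast_val, ZMod.cast_id]
      rw [this, Finset.image_id]
    rw [hTV, hVeq]
    simp
  have hc1 : ((v1 : ZMod 13)).val = v1 := ZMod.val_cast_of_lt hvlt1
  have hc2 : ((v2 : ZMod 13)).val = v2 := ZMod.val_cast_of_lt hvlt2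
  have hc3 : ((v3 : ZMod 13)).val = v3 := ZMod.val_cast_of_lt hvlt3
  have hc4 : ((v4 : ZMod 13)).val = v4 := ZMod.val_cast_of_lt hvlt4
  -- apply the decided lemma
  obtain ⟨l, hl⟩ := aux_E513 (v1 : ZMod 13) (v2 : ZMod 13) (v3 : ZMod 13) (v4 : ZMod 13)
      (by rw [hc1]; exact hv01)
      (by rw [hc1, hc2]; exact hv12)
      (by rw [hc2, hc3]; exact hv23)
      (by rw [hc3, hc4]; exact hv34)
      (by
        rw [← hTeq]
        refine ⟨?_, ?_, ?_, ?_, ?_, ?_⟩ <;> rw [hTmult] <;> decide)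
  rw [← hTeq] at hl
  -- translate back
  refine ⟨l + s, ?_⟩
  have hST : S = T.image (fun x => x + s) := by
    rw [hT, Finset.image_image]
    have : ((fun x : ZMod 13 => x + s) ∘ fun x : ZMod 13 => x + (-s)) = id := by
      funext x; simp
    rw [this, Finset.image_id]
  rw [hST, hl, Finset.image_image]
  congr 1
  funext x
  simp [add_assoc]
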